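/- arXiv:2507.15261 — 3 statements merged into one kernel-verified Lean document; each statement's English description precedes it below -/
import Mathlib

section
/- Consider the perfectly inelastic collision between a quadrotor and a payload particle. Suppose m > 0, m_P > 0 are real numbers, J is an invertible 3×3 real matrix, and v⁻, v⁺, vP⁻, vP⁺, ω⁻, ω⁺, r, n are vectors in ℝ³ and I a real number satisfying the linear impulse–momentum equations m(v⁺ − v⁻) = I n and m_P(vP⁺ − vP⁻) = −I n, the angular impulse–momentum equation J(ω⁺ − ω⁻) = I (r × n), and the perfectly-inelastic contact constraint v⁺ + ω⁺ × r = vP⁺. If μ := 1/m + 1/m_P + ⟪(J⁻¹(r × n)) × r, n⟫ ≠ 0, then the impulse magnitude satisfies I = (1/μ)·⟪vP⁻ − v⁻ − ω⁻ × r, n⟫. -/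
open Matrix

/-- Perfectly inelastic collision between quadrotor and payload particle: the
impulse–momentum equations together with the perfectly-inelastic contact
constraint determine the impulse magnitude `I`. -/
theorem collision_impulse_magnitude
    (m mP : ℝ) (hm : 0 < m) (hmP : 0 < mP)
    (J : Matrix (Fin 3) (Fin 3) ℝ) (hJ : IsUnit J.det)
    (vminus vplus vPminus vPplus ωminus ωplus r n : Fin 3 → ℝ) (I : ℝ)
    (hn : n ⬝ᵥ n = 1)
    (h1 : m • (vplus - vminus) = I • n)
    (h2 : mP • (vPplus - vPminus) = -(I • n))
    (h3 : J *ᵥ (ωplus - ωminus) = I • (crossProduct r n))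
    (h4 : vplus + crossProduct ωplus r = vPplus)
    (μ : ℝ)
    (hμdef : μ = 1 / m + 1 / mP + crossProduct (J⁻¹ *ᵥ crossProduct r n) r ⬝ᵥ n)
    (hμ : μ ≠ 0) :
    I = (1 / μ) * ((vPminus - vminus - crossProduct ωminus r) ⬝ᵥ n) := by
  set u : Fin 3 → ℝ := J⁻¹ *ᵥ crossProduct r n with hu
  have hω : ωplus = ωminus + I • u := by
    have h := congrArg (fun w => J⁻¹ *ᵥ w) h3
    simp only [Matrix.mulVec_mulVec, Matrix.nonsing_inv_mul J hJ, Matrix.one_mulVec,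
      Matrix.mulVec_smul] at h
    rw [sub_eq_iff_eq_add] at h
    rw [h, ← hu]
    abel
  -- dot each equation with n
  have e1 : m * ((vplus ⬝ᵥ n) - (vminus ⬝ᵥ n)) = I := by
    have := congrArg (fun w => w ⬝ᵥ n) h1
    simpa [smul_dotProduct, sub_dotProduct, hn, mul_sub] using this
  have e2 : mP * ((vPplus ⬝ᵥ n) - (vPminus ⬝ᵥ n)) = -I := by
    have := congrArg (fun w => w ⬝ᵥ n) h2
    simpa [smul_dotProduct, sub_dotProduct, neg_dotProduct, hn, mul_sub] using this
  have e4 : (vplus ⬝ᵥ n) + (crossProduct ωminus r ⬝ᵥ n) + I * (crossProduct u r ⬝ᵥ n)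
      = vPplus ⬝ᵥ n := by
    have := congrArg (fun w => w ⬝ᵥ n) h4
    simp only [hω, map_add, _root_.map_smul, LinearMap.add_apply, LinearMap.smul_apply,
      add_dotProduct, smul_dotProduct, smul_eq_mul] at this
    linarith
  have hm' := hm.ne'
  have hmP' := hmP.ne'
  have key : I * μ = (vPminus - vminus - crossProduct ωminus r) ⬝ᵥ n := by
    rw [hμdef]
    simp only [sub_dotProduct]
    set A := vminus ⬝ᵥ n
    set B := vPminus ⬝ᵥ n
    set C := crossProduct ωminus r ⬝ᵥ n
    set D := crossProduct u r ⬝ᵥ n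
    set P := vplus ⬝ᵥ n
    set Q := vPplus ⬝ᵥ n
    field_simp
    linear_combination (-(mP : ℝ)) * e1 + m * e2 + (m * mP) * e4
  rw [← key, one_div, mul_comm μ⁻¹, mul_assoc, mul_inv_cancel₀ hμ, mul_one]
end

section
/- Thrust-MRAC Lyapunov derivative: let b > 0, Γ_t > 0, let L_t be a 3×3 real matrix, and let e_v : ℝ → ℝ³, k̃_t : ℝ → ℝ, t_d : ℝ → ℝ³ be differentiable functions satisfying ė_v = −L_t e_v + b k̃_t t_d and k̃'_t = −Γ_t ⟪e_v, t_d⟫. Then the Lyapunov function V_t(t) = (1/2)⟪e_v(t), e_v(t)⟫ + (b/(2Γ_t)) k̃_t(t)² is differentiable with V̇_t(t) = −⟪e_v(t), L_t e_v(t)⟫ for every t; if moreover L_t is positive definite, then V̇_t(t) ≤ 0 for all t, with strict inequality whenever e_v(t) ≠ 0. -/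
open Matrix

theorem HasDerivAt.dotProduct {ι : Type*} [Fintype ι] {f g : ℝ → ι → ℝ} {f' g' : ι → ℝ}
    {t : ℝ} (hf : HasDerivAt f f' t) (hg : HasDerivAt g g' t) :
    HasDerivAt (fun s => f s ⬝ᵥ g s) (f' ⬝ᵥ g t + f t ⬝ᵥ g') t := by
  have hfi := hasDerivAt_pi.mp hf
  have hgi := hasDerivAt_pi.mp hg
  have hsum := HasDerivAt.fun_sum (u := Finset.univ) fun i _ => (hfi i).fun_mul (hgi i)
  rw [Finset.sum_add_distrib] at hsum
  exact hsum

theorem HasDerivAt.half_dotProduct_self {ι : Type*} [Fintype ι] {f : ℝ → ι → ℝ} {f' : ι → ℝ}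
    {t : ℝ} (hf : HasDerivAt f f' t) :
    HasDerivAt (fun s => 1 / 2 * (f s ⬝ᵥ f s)) (f t ⬝ᵥ f') t := by
  refine ((hf.dotProduct hf).const_mul (1 / 2)).congr_deriv ?_
  rw [dotProduct_comm f']
  ring

theorem dotProduct_mulVec_self_nonneg {n : Type*} [Fintype n] {L : Matrix n n ℝ}
    (hL : ∀ x : n → ℝ, x ≠ 0 → 0 < x ⬝ᵥ (L *ᵥ x)) (x : n → ℝ) : 0 ≤ x ⬝ᵥ (L *ᵥ x) := by
  rcases eq_or_ne x 0 with rfl | hx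
  · simp
  · exact (hL x hx).le

theorem thrust_mrac_lyapunov_derivative_general
    (b Γt : ℝ) (hΓ : 0 < Γt)
    (Lt : Matrix (Fin 3) (Fin 3) ℝ)
    (e : ℝ → Fin 3 → ℝ) (kt : ℝ → ℝ) (td : ℝ → Fin 3 → ℝ)
    (he : ∀ t, HasDerivAt e (-(Lt *ᵥ e t) + (b * kt t) • td t) t)
    (hk : ∀ t, HasDerivAt kt (-(Γt * (e t ⬝ᵥ td t))) t)
    (V : ℝ → ℝ)
    (hV : V = fun t => (1 / 2) * (e t ⬝ᵥ e t) + (b / (2 * Γt)) * kt t ^ 2) :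
    (∀ t, HasDerivAt V (-(e t ⬝ᵥ (Lt *ᵥ e t))) t) ∧
    ((∀ x : Fin 3 → ℝ, x ≠ 0 → 0 < x ⬝ᵥ (Lt *ᵥ x)) →
      ∀ t, deriv V t ≤ 0 ∧ (e t ≠ 0 → deriv V t < 0)) := by
  have hderiv : ∀ t, HasDerivAt V (-(e t ⬝ᵥ (Lt *ᵥ e t))) t := by
    intro t
    have hsum := (he t).half_dotProduct_self.fun_add (((hk t).pow 2).const_mul (b / (2 * Γt)))
    subst hV
    refine hsum.congr_deriv ?_
    -- the adaptive term `b k ⟪e, t_d⟫` cancels against the adaptation law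
    rw [dotProduct_add, dotProduct_neg, dotProduct_smul, smul_eq_mul]
    field_simp
    ring
  refine ⟨hderiv, fun hL t => ?_⟩
  rw [(hderiv t).deriv]
  exact ⟨neg_nonpos.mpr (dotProduct_mulVec_self_nonneg hL (e t)),
    fun he0 => neg_neg_of_pos (hL (e t) he0)⟩

/-- Thrust-MRAC Lyapunov derivative: `V̇_t = -⟪e_v, L_t e_v⟫`, which is
nonpositive (negative when `e_v ≠ 0`) if `L_t` is positive definite. -/
theorem thrust_mrac_lyapunov_derivative
    (b Γt : ℝ) (hb : 0 < b) (hΓ : 0 < Γt)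
    (Lt : Matrix (Fin 3) (Fin 3) ℝ)
    (e : ℝ → Fin 3 → ℝ) (kt : ℝ → ℝ) (td : ℝ → Fin 3 → ℝ)
    (htd : Differentiable ℝ td)
    (he : ∀ t, HasDerivAt e (-(Lt *ᵥ e t) + (b * kt t) • td t) t)
    (hk : ∀ t, HasDerivAt kt (-(Γt * (e t ⬝ᵥ td t))) t)
    (V : ℝ → ℝ)
    (hV : V = fun t => (1 / 2) * (e t ⬝ᵥ e t) + (b / (2 * Γt)) * kt t ^ 2) :
    (∀ t, HasDerivAt V (-(e t ⬝ᵥ (Lt *ᵥ e t))) t) ∧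
    ((∀ x : Fin 3 → ℝ, x ≠ 0 → 0 < x ⬝ᵥ (Lt *ᵥ x)) →
      ∀ t, deriv V t ≤ 0 ∧ (e t ≠ 0 → deriv V t < 0)) :=
  thrust_mrac_lyapunov_derivative_general b Γt hΓ Lt e kt td he hk V hV
end

section
/- Boundedness from the angular-rate MRAC Lyapunov function: let J_S be a symmetric positive-definite 3×3 real matrix with smallest eigenvalue λ_J > 0, K_p a symmetric positive-definite 3×3 matrix, K_ω, L_ω 3×3 matrices with x ↦ ⟪x, J_S(K_ω + L_ω)x⟫ positive semidefinite, Γ_ω a symmetric positive-definite 8×8 matrix, φ_ω : ℝ → ℝ^{8×3} continuous, and suppose e_ω, γ̃ satisfy for all t ≥ 0 the equations J_S ė_ω = −J_S(K_ω + L_ω) e_ω − K_p e_ω − φ_ωᵀ γ̃ and γ̃' = Γ_ω φ_ω e_ω. Then V_ω(t) = (1/2)⟪e_ω, J_S e_ω⟫ + (1/2)⟪γ̃, Γ_ω⁻¹ γ̃⟫ is nonincreasing on [0, ∞); in particular ‖e_ω(t)‖² ≤ (2/λ_J) V_ω(0) for all t ≥ 0, so e_ω and γ̃ are bounded. -/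
/-!
The cross terms cancel along solutions: the estimator contributes `⟪γ̃, Γ_ω⁻¹ γ̃'⟫ = ⟪γ̃, φ_ω e_ω⟫`,
which is exactly the term `⟪e_ω, φ_ωᵀ γ̃⟫` of the tracking dynamics. Hence
`V̇_ω = -⟪e_ω, J_S(K_ω + L_ω) e_ω⟫ - ⟪e_ω, K_p e_ω⟫ ≤ 0`, so `V_ω` is nonincreasing. Both summands
of `V_ω` are nonnegative, so each is at most `V_ω(0)`, and the Rayleigh bound
`λ_min(A) ‖x‖² ≤ ⟪x, A x⟫` turns this into bounds on `e_ω` and `γ̃`.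
-/

open Matrix

section Derivatives

variable {n : Type*} [Fintype n] {u w : ℝ → n → ℝ} {du dw : n → ℝ} {t : ℝ}

theorem HasDerivAt.dotProduct_s13 (hu : HasDerivAt u du t) (hw : HasDerivAt w dw t) :
    HasDerivAt (fun s => u s ⬝ᵥ w s) (du ⬝ᵥ w t + u t ⬝ᵥ dw) t := by
  have := HasDerivAt.fun_sum (u := Finset.univ) fun i _ =>
    (hasDerivAt_pi.1 hu i).fun_mul (hasDerivAt_pi.1 hw i)
  rw [Finset.sum_add_distrib] at this
  exact this

theorem HasDerivAt.const_mulVec {m : Type*} (A : Matrix m n ℝ) (hw : HasDerivAt w dw t) :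
    HasDerivAt (fun s => A *ᵥ w s) (A *ᵥ dw) t :=
  hasDerivAt_pi.2 fun i => HasDerivAt.fun_sum fun j _ => (hasDerivAt_pi.1 hw j).const_mul (A i j)

theorem HasDerivAt.dotProduct_mulVec_self {A : Matrix n n ℝ} (hA : A.IsSymm)
    (hu : HasDerivAt u du t) :
    HasDerivAt (fun s => u s ⬝ᵥ (A *ᵥ u s)) (2 * (u t ⬝ᵥ (A *ᵥ du))) t := by
  convert hu.dotProduct_s13 (hu.const_mulVec A) using 1
  rw [dotProduct_mulVec, ← mulVec_transpose, hA.eq, dotProduct_comm]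
  ring

end Derivatives

namespace Matrix

variable {n : Type*} [Fintype n] [DecidableEq n] {A : Matrix n n ℝ}

open scoped MatrixOrder in
theorem IsHermitian.iInf_eigenvalues_mul_dotProduct_self_le (hA : A.IsHermitian) (x : n → ℝ) :
    (⨅ i, hA.eigenvalues i) * (x ⬝ᵥ x) ≤ x ⬝ᵥ (A *ᵥ x) := by
  have hle : algebraMap ℝ _ (⨅ i, hA.eigenvalues i) ≤ A := by
    rw [algebraMap_le_iff_le_spectrum (ha := hA.isSelfAdjoint),
      hA.spectrum_real_eq_range_eigenvalues]
    rintro _ ⟨i, rfl⟩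
    exact ciInf_le (Finite.bddBelow_range _) i
  have := (le_iff.1 hle).dotProduct_mulVec_nonneg x
  rw [Algebra.algebraMap_eq_smul_one, sub_mulVec, smul_mulVec, one_mulVec, star_trivial,
    dotProduct_sub, dotProduct_smul, smul_eq_mul, sub_nonneg] at this
  exact this

theorem PosDef.iInf_eigenvalues_pos [Nonempty n] (hA : A.PosDef) :
    0 < ⨅ i, hA.1.eigenvalues i := by
  obtain ⟨i, hi⟩ := exists_eq_ciInf_of_finite (f := hA.1.eigenvalues)
  exact hi ▸ hA.eigenvalues_pos i

theorem PosDef.dotProduct_self_le_div [Nonempty n] (hA : A.PosDef) {x : n → ℝ} {c : ℝ}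
    (h : x ⬝ᵥ (A *ᵥ x) ≤ c) : x ⬝ᵥ x ≤ c / ⨅ i, hA.1.eigenvalues i := by
  rw [le_div_iff₀ hA.iInf_eigenvalues_pos, mul_comm]
  exact (hA.1.iInf_eigenvalues_mul_dotProduct_self_le x).trans h

end Matrix

theorem hasDerivAt_mrac_lyapunov {n p : Type*} [Fintype n] [Fintype p] [DecidableEq p]
    {J Kp M : Matrix n n ℝ} (hJ : J.IsSymm) {Γ : Matrix p p ℝ} (hΓ : Γ.IsSymm) (hΓu : IsUnit Γ)
    {Φ : Matrix p n ℝ} {e : ℝ → n → ℝ} {γ : ℝ → p → ℝ} {de : n → ℝ} {t : ℝ}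
    (he : HasDerivAt e de t) (heq : J *ᵥ de = -(J *ᵥ (M *ᵥ e t)) - Kp *ᵥ e t - Φᵀ *ᵥ γ t)
    (hγ : HasDerivAt γ (Γ *ᵥ (Φ *ᵥ e t)) t) :
    HasDerivAt (fun s => 1 / 2 * (e s ⬝ᵥ (J *ᵥ e s)) + 1 / 2 * (γ s ⬝ᵥ (Γ⁻¹ *ᵥ γ s)))
      (-(e t ⬝ᵥ ((J * M) *ᵥ e t)) - e t ⬝ᵥ (Kp *ᵥ e t)) t := by
  refine (((he.dotProduct_mulVec_self hJ).const_mul (1 / 2)).add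
    ((hγ.dotProduct_mulVec_self hΓ.inv).const_mul (1 / 2))).congr_deriv ?_
  have hcross : γ t ⬝ᵥ (Γ⁻¹ *ᵥ (Γ *ᵥ (Φ *ᵥ e t))) = e t ⬝ᵥ (Φᵀ *ᵥ γ t) := by
    rw [mulVec_mulVec, nonsing_inv_mul _ ((isUnit_iff_isUnit_det Γ).1 hΓu), one_mulVec,
      dotProduct_comm, dotProduct_mulVec, vecMul_transpose]
  rw [hcross, heq, dotProduct_sub, dotProduct_sub, dotProduct_neg, mulVec_mulVec]
  ring

theorem angular_rate_mrac_boundedness_general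
    (JS : Matrix (Fin 3) (Fin 3) ℝ) (hJS : JS.PosDef)
    (lamJ : ℝ) (hlamJ : lamJ = ⨅ i, hJS.1.eigenvalues i)
    (Kp : Matrix (Fin 3) (Fin 3) ℝ) (hKp : Kp.PosDef)
    (Kω Lω : Matrix (Fin 3) (Fin 3) ℝ)
    (hsemi : ∀ x : Fin 3 → ℝ, 0 ≤ x ⬝ᵥ ((JS * (Kω + Lω)) *ᵥ x))
    (Γω : Matrix (Fin 8) (Fin 8) ℝ) (hΓω : Γω.PosDef)
    (Φ : ℝ → Matrix (Fin 8) (Fin 3) ℝ)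
    (e : ℝ → Fin 3 → ℝ) (γ : ℝ → Fin 8 → ℝ)
    (de : ℝ → Fin 3 → ℝ) (he : ∀ t ≥ (0:ℝ), HasDerivAt e (de t) t)
    (heq : ∀ t ≥ (0:ℝ), JS *ᵥ de t
        = -(JS *ᵥ ((Kω + Lω) *ᵥ e t)) - Kp *ᵥ e t - (Φ t)ᵀ *ᵥ γ t)
    (hγ : ∀ t ≥ (0:ℝ), HasDerivAt γ (Γω *ᵥ (Φ t *ᵥ e t)) t)
    (V : ℝ → ℝ)
    (hV : V = fun t =>
      (1 / 2) * (e t ⬝ᵥ (JS *ᵥ e t)) + (1 / 2) * (γ t ⬝ᵥ (Γω⁻¹ *ᵥ γ t))) :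
    AntitoneOn V (Set.Ici 0) ∧
    (∀ t ≥ (0:ℝ), e t ⬝ᵥ e t ≤ (2 / lamJ) * V 0) ∧
    (∃ C, ∀ t ≥ (0:ℝ), e t ⬝ᵥ e t ≤ C) ∧
    (∃ C, ∀ t ≥ (0:ℝ), γ t ⬝ᵥ γ t ≤ C) := by
  have hΓinv : Γω⁻¹.PosDef := hΓω.inv
  have hderiv : ∀ t ∈ Set.Ici (0:ℝ), HasDerivAt V
      (-(e t ⬝ᵥ ((JS * (Kω + Lω)) *ᵥ e t)) - e t ⬝ᵥ (Kp *ᵥ e t)) t := fun t ht =>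
    hV ▸ hasDerivAt_mrac_lyapunov (isHermitian_iff_isSymm.1 hJS.1)
      (isHermitian_iff_isSymm.1 hΓω.1) hΓω.isUnit (he t ht) (heq t ht) (hγ t ht)
  have hanti : AntitoneOn V (Set.Ici 0) :=
    antitoneOn_of_hasDerivWithinAt_nonpos (convex_Ici 0)
      (fun t ht => (hderiv t ht).continuousAt.continuousWithinAt)
      (fun t ht => (hderiv t (interior_subset ht)).hasDerivWithinAt)
      (fun t _ => by
        linarith [hsemi (e t), by simpa using hKp.posSemidef.dotProduct_mulVec_nonneg (e t)])
  have hquad : ∀ t ≥ (0:ℝ),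
      e t ⬝ᵥ (JS *ᵥ e t) ≤ 2 * V 0 ∧ γ t ⬝ᵥ (Γω⁻¹ *ᵥ γ t) ≤ 2 * V 0 := by
    intro t ht
    have hVt := hanti Set.self_mem_Ici ht ht
    have hJe := hJS.posSemidef.dotProduct_mulVec_nonneg (e t)
    have hΓγ := hΓinv.posSemidef.dotProduct_mulVec_nonneg (γ t)
    simp only [hV, star_trivial] at hVt hJe hΓγ ⊢
    constructor <;> linarith
  have he_bound : ∀ t ≥ (0:ℝ), e t ⬝ᵥ e t ≤ (2 / lamJ) * V 0 := fun t ht => by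
    rw [div_mul_eq_mul_div, hlamJ]
    exact hJS.dotProduct_self_le_div (hquad t ht).1
  exact ⟨hanti, he_bound, ⟨_, he_bound⟩,
    ⟨_, fun t ht => hΓinv.dotProduct_self_le_div (hquad t ht).2⟩⟩

/-- Boundedness from the angular-rate MRAC Lyapunov function: `V_ω` is
nonincreasing on `[0, ∞)`, `‖e_ω(t)‖² ≤ (2/λ_J) V_ω(0)` for all `t ≥ 0`, and
`e_ω`, `γ̃` are bounded. -/
theorem angular_rate_mrac_boundedness
    (JS : Matrix (Fin 3) (Fin 3) ℝ) (hJS : JS.PosDef)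
    (lamJ : ℝ) (hlamJ : lamJ = ⨅ i, hJS.1.eigenvalues i) (hlamJpos : 0 < lamJ)
    (Kp : Matrix (Fin 3) (Fin 3) ℝ) (hKp : Kp.PosDef)
    (Kω Lω : Matrix (Fin 3) (Fin 3) ℝ)
    (hsemi : ∀ x : Fin 3 → ℝ, 0 ≤ x ⬝ᵥ ((JS * (Kω + Lω)) *ᵥ x))
    (Γω : Matrix (Fin 8) (Fin 8) ℝ) (hΓω : Γω.PosDef)
    (Φ : ℝ → Matrix (Fin 8) (Fin 3) ℝ)
    (hΦc : ∀ i j, Continuous fun t => Φ t i j)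
    (e : ℝ → Fin 3 → ℝ) (γ : ℝ → Fin 8 → ℝ)
    (de : ℝ → Fin 3 → ℝ) (he : ∀ t ≥ (0:ℝ), HasDerivAt e (de t) t)
    (heq : ∀ t ≥ (0:ℝ), JS *ᵥ de t
        = -(JS *ᵥ ((Kω + Lω) *ᵥ e t)) - Kp *ᵥ e t - (Φ t)ᵀ *ᵥ γ t)
    (hγ : ∀ t ≥ (0:ℝ), HasDerivAt γ (Γω *ᵥ (Φ t *ᵥ e t)) t)
    (V : ℝ → ℝ)
    (hV : V = fun t =>
      (1 / 2) * (e t ⬝ᵥ (JS *ᵥ e t)) + (1 / 2) * (γ t ⬝ᵥ (Γω⁻¹ *ᵥ γ t))) :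
    AntitoneOn V (Set.Ici 0) ∧
    (∀ t ≥ (0:ℝ), e t ⬝ᵥ e t ≤ (2 / lamJ) * V 0) ∧
    (∃ C, ∀ t ≥ (0:ℝ), e t ⬝ᵥ e t ≤ C) ∧
    (∃ C, ∀ t ≥ (0:ℝ), γ t ⬝ᵥ γ t ≤ C) :=
  angular_rate_mrac_boundedness_general JS hJS lamJ hlamJ Kp hKp Kω Lω hsemi Γω hΓω Φ e γ de he heq
    hγ V hV
end
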